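/- Let λ = 2 in the pantograph: A, B, C, D, E, F points in the plane with parallelogram BCED, |AC| = 2|AB|, |CF| = 2|EF|, AB parallel to CE and BC parallel to EF. Then D is the midpoint of segment AF, i.e., D = (A + F)/2. -/
import Mathlib

lemma seg_half_midpoint (X Y Z : EuclideanSpace ℝ (Fin 2))
    (h : Y ∈ segment ℝ X Z) (hd : dist X Z = 2 * dist X Y) :
    Y = midpoint ℝ X Z := by
  obtain ⟨a, b, ha, hb, hab, hY⟩ := h
  have ha' : a = 1 - b := by linarith
  have hY' : Y = X + b • (Z - X) := by
    rw [← hY, ha']; module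
  have hdist : dist X Y = b * dist X Z := by
    rw [hY', dist_eq_norm, dist_eq_norm]
    have : X - (X + b • (Z - X)) = b • (X - Z) := by module
    rw [this, norm_smul, Real.norm_eq_abs, abs_of_nonneg hb]
  rcases eq_or_ne (dist X Z) 0 with h0 | h0
  · have hXZ : X = Z := by rwa [dist_eq_zero] at h0
    subst hXZ
    rw [hY', midpoint_self]; simp
  · have h1 : (2 * b - 1) * dist X Z = 0 := by
      rw [hdist] at hd; linear_combination -hd
    have hb2 : b = 1 / 2 := by
      rcases mul_eq_zero.mp h1 with h2 | h2
      · linarith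
      · exact absurd h2 h0
    rw [hY', hb2, midpoint_eq_smul_add]
    simp only [invOf_eq_inv]
    module

/-- The pantograph with ratio `λ = 2` used as a half-adder: with parallelogram
`BCED`, `|AC| = 2|AB|`, `|CF| = 2|EF|`, `AB ∥ CE` and `BC ∥ EF`, the vertex `D`
is the midpoint of segment `AF`. -/
theorem pantograph_half_adder
    (A B C D E F : EuclideanSpace ℝ (Fin 2))
    (hB : B ∈ segment ℝ A C) (hE : E ∈ segment ℝ C F)
    (hAC : dist A C = 2 * dist A B) (hCF : dist C F = 2 * dist E F)
    (hpar1 : ∃ μ : ℝ, 0 < μ ∧ E - C = μ • (B - A))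
    (hpar2 : ∃ ν : ℝ, 0 < ν ∧ F - E = ν • (C - B))
    (hD : D = B + E - C) :
    D = midpoint ℝ A F := by
  have hB' : B = midpoint ℝ A C := seg_half_midpoint A B C hB hAC
  have hE' : E = midpoint ℝ C F := by
    have h1 : E ∈ segment ℝ F C := by rwa [segment_symm] at hE
    have h2 : dist F C = 2 * dist F E := by
      rw [dist_comm F C, dist_comm F E]; exact hCF
    rw [seg_half_midpoint F E C h1 h2, midpoint_comm]
  rw [hD, hB', hE', midpoint_eq_smul_add, midpoint_eq_smul_add,
    midpoint_eq_smul_add]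
  simp only [invOf_eq_inv]
  module
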